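/- If E‖X‖⁴ < ∞, then for independent X, X₁, X₂, X₃ with distribution F, the double centered distance satisfies E[d²(X₁,X) · d(X₂,X) · d(X₃,X)] = 0. -/

import Mathlib

open MeasureTheory ProbabilityTheory

/-!
Conditionally on `(X, X₁, X₃)`, the only factor depending on `X₂` is `d(X₂, X)`, and
`∫ d(z, x) dF(z) = g(x) - Δ - g(x) + Δ = 0` for every `x`, since `∫ g dF = Δ`. By independence the
expectation is the iterated integral over `F` in `X₂` first, so it vanishes.
-/

section IndepFun

variable {Ω β γ G : Type*} [MeasurableSpace Ω] {μ : Measure Ω} [IsFiniteMeasure μ]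
  [MeasurableSpace β] [MeasurableSpace γ] [NormedAddCommGroup G] [NormedSpace ℝ G]

theorem ProbabilityTheory.IndepFun.integral_comp_eq_zero_of_integral_eq_zero
    {Y : Ω → β} {Z : Ω → γ} (hYZ : IndepFun Y Z μ) (hY : Measurable Y) (hZ : Measurable Z)
    {h : β → γ → G} (hh : StronglyMeasurable (Function.uncurry h))
    (h0 : ∀ y, ∫ z, h y z ∂(μ.map Z) = 0) :
    ∫ ω, h (Y ω) (Z ω) ∂μ = 0 := by
  have hmap : μ.map (fun ω ↦ (Y ω, Z ω)) = (μ.map Y).prod (μ.map Z) :=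
    (indepFun_iff_map_prod_eq_prod_map_map hY.aemeasurable hZ.aemeasurable).mp hYZ
  have hcomp : ∫ ω, h (Y ω) (Z ω) ∂μ = ∫ q, Function.uncurry h q ∂(μ.map Y).prod (μ.map Z) := by
    rw [← hmap, integral_map (hY.prodMk hZ).aemeasurable hh.aestronglyMeasurable]
    rfl
  rw [hcomp]
  by_cases hi : Integrable (Function.uncurry h) ((μ.map Y).prod (μ.map Z))
  · simp [integral_prod _ hi, h0]
  · exact integral_undef hi

end IndepFun

section DoubleCentered

variable {E : Type*} [NormedAddCommGroup E] [MeasurableSpace E] (F : Measure E)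

noncomputable def meanDist (x : E) : ℝ := ∫ y, ‖y - x‖ ∂F

noncomputable def giniMeanDiff : ℝ := ∫ x, ∫ y, ‖x - y‖ ∂F ∂F

noncomputable def doubleCenteredDist (x₁ x₂ : E) : ℝ :=
  ‖x₁ - x₂‖ - meanDist F x₁ - meanDist F x₂ + giniMeanDiff F

theorem integral_meanDist : ∫ x, meanDist F x ∂F = giniMeanDiff F := by
  simp_rw [meanDist, giniMeanDiff, norm_sub_rev]

variable {F}

theorem integrable_meanDist [IsFiniteMeasure F] (hF : Integrable id F) :
    Integrable (meanDist F) F :=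
  ((hF.comp_snd F).sub (hF.comp_fst F)).norm.integral_prod_left

theorem integral_doubleCenteredDist_left [IsProbabilityMeasure F]
    (hF : Integrable id F) (x : E) :
    ∫ z, doubleCenteredDist F z x ∂F = 0 := by
  have hdist : Integrable (fun z ↦ ‖z - x‖) F := (hF.sub (integrable_const x)).norm
  have hsplit : (fun z ↦ doubleCenteredDist F z x)
      = fun z ↦ (‖z - x‖ - meanDist F z) + (giniMeanDiff F - meanDist F x) := by
    funext z
    rw [doubleCenteredDist]
    ring
  rw [hsplit, integral_add (f := fun z ↦ ‖z - x‖ - meanDist F z)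
      (hdist.sub (integrable_meanDist hF)) (integrable_const _),
    integral_sub (f := fun z ↦ ‖z - x‖) hdist (integrable_meanDist hF), integral_meanDist]
  simp [meanDist]

variable [BorelSpace E] [SecondCountableTopology E]

theorem stronglyMeasurable_meanDist [SFinite F] : StronglyMeasurable (meanDist F) :=
  (continuous_snd.sub continuous_fst).norm.stronglyMeasurable.integral_prod_right'

@[fun_prop]
theorem Measurable.doubleCenteredDist [SFinite F] {α : Type*} [MeasurableSpace α] {f g : α → E}
    (hf : Measurable f) (hg : Measurable g) :
    Measurable fun a ↦ doubleCenteredDist F (f a) (g a) :=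
  ((((hf.sub hg).norm).sub (stronglyMeasurable_meanDist.measurable.comp hf)).sub
    (stronglyMeasurable_meanDist.measurable.comp hg)).add_const _

end DoubleCentered

theorem gini_double_centered_sq_orthogonal_general
    {Ω : Type*} [MeasurableSpace Ω] (μ : Measure Ω) [IsProbabilityMeasure μ]
    (p : ℕ) (F : Measure (EuclideanSpace ℝ (Fin p))) [IsProbabilityMeasure F]
    (X X₁ X₂ X₃ : Ω → EuclideanSpace ℝ (Fin p))
    (hX : Measurable X) (hX₁ : Measurable X₁) (hX₂ : Measurable X₂) (hX₃ : Measurable X₃)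
    (hX₂F : μ.map X₂ = F)
    (hindep : iIndepFun ![X, X₁, X₂, X₃] μ)
    (hmom : Integrable (fun x => ‖x‖ ^ 4) F)
    (Δ : ℝ) (hΔ : Δ = ∫ x, ∫ y, ‖x - y‖ ∂F ∂F)
    (g : EuclideanSpace ℝ (Fin p) → ℝ) (hg : ∀ x, g x = ∫ y, ‖y - x‖ ∂F)
    (d : EuclideanSpace ℝ (Fin p) → EuclideanSpace ℝ (Fin p) → ℝ)
    (hd : ∀ x₁ x₂, d x₁ x₂ = ‖x₁ - x₂‖ - g x₁ - g x₂ + Δ) :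
    ∫ ω, d (X₁ ω) (X ω) ^ 2 * d (X₂ ω) (X ω) * d (X₃ ω) (X ω) ∂μ = 0 := by
  obtain rfl : d = doubleCenteredDist F := by
    funext x₁ x₂
    simp [hd, hg, hΔ, doubleCenteredDist, meanDist, giniMeanDiff]
  have hF : Integrable id F := (integrable_norm_iff aestronglyMeasurable_id).mp <| by
    simpa using integrable_norm_rpow_of_le aestronglyMeasurable_id zero_le_one (by norm_num)
      (by norm_num : (1 : ℝ) ≤ 4) (by simpa using hmom)
  have hmeas : ∀ i, Measurable (![X, X₁, X₂, X₃] i) := by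
    intro i
    fin_cases i
    exacts [hX, hX₁, hX₂, hX₃]
  have hindY : IndepFun (fun ω ↦ (X ω, X₁ ω, X₃ ω)) X₂ μ :=
    (hindep.indepFun_finset {0, 1, 3} {2} (by decide) hmeas).comp
      (φ := fun v : ∀ i : ({0, 1, 3} : Finset (Fin 4)), EuclideanSpace ℝ (Fin p) ↦
        (v ⟨0, by decide⟩, v ⟨1, by decide⟩, v ⟨3, by decide⟩))
      (ψ := fun v : ∀ i : ({2} : Finset (Fin 4)), EuclideanSpace ℝ (Fin p) ↦ v ⟨2, by decide⟩)
      (by fun_prop) (by fun_prop)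
  refine hindY.integral_comp_eq_zero_of_integral_eq_zero (hX.prodMk (hX₁.prodMk hX₃)) hX₂
    (h := fun y x₂ ↦ doubleCenteredDist F y.2.1 y.1 ^ 2 * doubleCenteredDist F x₂ y.1 *
      doubleCenteredDist F y.2.2 y.1) ?_ fun y ↦ ?_
  · exact (by fun_prop : Measurable _).stronglyMeasurable
  · rw [hX₂F, integral_mul_const, integral_const_mul, integral_doubleCenteredDist_left hF,
      mul_zero, zero_mul]

/-- If `E‖X‖⁴ < ∞`, then for independent `X, X₁, X₂, X₃` with
distribution `F`, the double centered distance satisfies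
`E[d²(X₁,X) · d(X₂,X) · d(X₃,X)] = 0`. -/
theorem gini_double_centered_sq_orthogonal
    {Ω : Type*} [MeasurableSpace Ω] (μ : Measure Ω) [IsProbabilityMeasure μ]
    (p : ℕ) (F : Measure (EuclideanSpace ℝ (Fin p))) [IsProbabilityMeasure F]
    (X X₁ X₂ X₃ : Ω → EuclideanSpace ℝ (Fin p))
    (hX : Measurable X) (hX₁ : Measurable X₁) (hX₂ : Measurable X₂) (hX₃ : Measurable X₃)
    (hXF : μ.map X = F) (hX₁F : μ.map X₁ = F) (hX₂F : μ.map X₂ = F) (hX₃F : μ.map X₃ = F)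
    (hindep : iIndepFun ![X, X₁, X₂, X₃] μ)
    (hmom : Integrable (fun x => ‖x‖ ^ 4) F)
    (Δ : ℝ) (hΔ : Δ = ∫ x, ∫ y, ‖x - y‖ ∂F ∂F)
    (g : EuclideanSpace ℝ (Fin p) → ℝ) (hg : ∀ x, g x = ∫ y, ‖y - x‖ ∂F)
    (d : EuclideanSpace ℝ (Fin p) → EuclideanSpace ℝ (Fin p) → ℝ)
    (hd : ∀ x₁ x₂, d x₁ x₂ = ‖x₁ - x₂‖ - g x₁ - g x₂ + Δ) :
    ∫ ω, d (X₁ ω) (X ω) ^ 2 * d (X₂ ω) (X ω) * d (X₃ ω) (X ω) ∂μ = 0 :=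
  gini_double_centered_sq_orthogonal_general μ p F X X₁ X₂ X₃ hX hX₁ hX₂ hX₃ hX₂F hindep hmom Δ hΔ g
    hg d hd
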